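/- arXiv:2312.00197 — 7 statements merged into one kernel-verified Lean document; each statement's English description precedes it below -/
import Mathlib

section
/- Define the Airy coefficients α : ℕ → ℝ by α(0) = 1, α(1) = 0, α(2) = -1/2, and α(k) = -(α(k-3) + α(k-2))/(k(k-1)) for all k ≥ 3, and define ψ : ℝ × ℝ → ℂ by ψ(r,t) = e^{it}·∑_{k=0}^∞ α(k)·r^k. Then ψ satisfies ∂²ψ/∂r²(r,t) - ∂²ψ/∂t²(r,t) + r·ψ(r,t) = 0 for all (r,t) ∈ ℝ × ℝ, together with ψ(0,t) = e^{it} and ∂ψ/∂r(0,t) = 0 for all t ∈ ℝ. -/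
/-! With `f r = ∑ α k r ^ k` we have `ψ (r, t) = e^{it} f r`, and since `∂²_t e^{it} = -e^{it}` the
equation reduces to the ODE `f'' + (1 + r) f = 0`; the recurrence for `α` is exactly this ODE read
off coefficient by coefficient. Termwise differentiation is legitimate because the recurrence
propagates the bound `α k ^ 2 * k ! ≤ 4 ^ k`, so the series has infinite radius of convergence. -/

open Complex
open FormalMultilinearSeries
open scoped Nat NNReal ENNReal

section PowerSeries

variable {𝕜 : Type*} [RCLike 𝕜] {a : ℕ → 𝕜}

def derivCoeff (a : ℕ → 𝕜) (n : ℕ) : 𝕜 := (n + 1) * a (n + 1)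

lemma summable_norm_mul_pow_of_radius_eq_top (ha : (ofScalars 𝕜 a).radius = ⊤) {r : ℝ}
    (hr : 0 ≤ r) : Summable fun n => ‖a n‖ * r ^ n := by
  lift r to ℝ≥0 using hr
  simpa only [ofScalars_norm] using
    (ofScalars 𝕜 a).summable_norm_mul_pow (ha ▸ ENNReal.coe_lt_top)

lemma summable_mul_pow_of_radius_eq_top (ha : (ofScalars 𝕜 a).radius = ⊤) (z : 𝕜) :
    Summable fun n => a n * z ^ n :=
  .of_norm_bounded (summable_norm_mul_pow_of_radius_eq_top ha (norm_nonneg z)) fun n => by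
    rw [norm_mul, norm_pow]

lemma radius_ofScalars_eq_top_of_summable
    (h : ∀ r : ℝ, 0 ≤ r → Summable fun n => ‖a n‖ * r ^ n) : (ofScalars 𝕜 a).radius = ⊤ :=
  ENNReal.eq_top_of_forall_nnreal_le fun r =>
    (ofScalars 𝕜 a).le_radius_of_summable_norm (by simpa only [ofScalars_norm] using h r r.2)

lemma radius_ofScalars_eq_top_of_sq_mul_factorial_le {C D : ℝ}
    (h : ∀ n, ‖a n‖ ^ 2 * n ! ≤ C * D ^ n) : (ofScalars 𝕜 a).radius = ⊤ := by
  refine radius_ofScalars_eq_top_of_summable fun r hr => ?_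
  have hmaj : Summable fun n : ℕ => (C * ((4 * D * r ^ 2) ^ n / n !) + (1 / 4 : ℝ) ^ n) / 2 :=
    (((Real.summable_pow_div_factorial _).mul_left C).add
      (summable_geometric_of_lt_one (r := 1 / 4) (by norm_num) (by norm_num))).div_const 2
  refine hmaj.of_nonneg_of_le (fun n => by positivity) fun n => ?_
  -- AM-GM with `x = ‖a n‖ (2r)^n` and `y = 2^{-n}`
  have hamgm := two_mul_le_add_sq (‖a n‖ * (2 * r) ^ n) ((1 / 2 : ℝ) ^ n)
  have hx : (‖a n‖ * (2 * r) ^ n) ^ 2 ≤ C * ((4 * D * r ^ 2) ^ n / n !) := by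
    rw [mul_div_assoc', le_div_iff₀ (by positivity)]
    calc (‖a n‖ * (2 * r) ^ n) ^ 2 * n ! = ‖a n‖ ^ 2 * n ! * (4 * r ^ 2) ^ n := by
          rw [mul_pow, ← pow_mul, mul_comm n 2, pow_mul]; ring
      _ ≤ C * D ^ n * (4 * r ^ 2) ^ n := mul_le_mul_of_nonneg_right (h n) (by positivity)
      _ = C * (4 * D * r ^ 2) ^ n := by ring
  have hy : ((1 / 2 : ℝ) ^ n) ^ 2 = (1 / 4 : ℝ) ^ n := by
    rw [← pow_mul, mul_comm, pow_mul]; norm_num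
  have hxy : 2 * (‖a n‖ * (2 * r) ^ n) * (1 / 2 : ℝ) ^ n = 2 * (‖a n‖ * r ^ n) := by
    rw [mul_assoc, mul_assoc, ← mul_pow]; ring
  linarith

lemma radius_ofScalars_derivCoeff (ha : (ofScalars 𝕜 a).radius = ⊤) :
    (ofScalars 𝕜 (derivCoeff a)).radius = ⊤ := by
  refine radius_ofScalars_eq_top_of_summable fun r hr => ?_
  have hs := (summable_nat_add_iff 1).mpr
    (summable_norm_mul_pow_of_radius_eq_top ha (by positivity : (0 : ℝ) ≤ 2 * r + 1))
  refine hs.of_nonneg_of_le (fun n => by positivity) fun n => ?_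
  have hn : (n : ℝ) + 1 ≤ 2 ^ n := by exact_mod_cast Nat.lt_two_pow_self
  calc ‖derivCoeff a n‖ * r ^ n = ‖a (n + 1)‖ * ((n + 1) * r ^ n) := by
        rw [derivCoeff, norm_mul, ← Nat.cast_add_one, RCLike.norm_natCast]; push_cast; ring
    _ ≤ ‖a (n + 1)‖ * (2 * r + 1) ^ (n + 1) := by
        gcongr
        calc (n + 1) * r ^ n ≤ 2 ^ n * r ^ n := by gcongr
          _ = (2 * r) ^ n := (mul_pow _ _ _).symm
          _ ≤ (2 * r + 1) ^ n := by gcongr; linarith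
          _ ≤ (2 * r + 1) ^ (n + 1) := pow_le_pow_right₀ (by linarith) n.le_succ

lemma hasDerivAt_tsum_mul_pow (ha : (ofScalars 𝕜 a).radius = ⊤) (z : 𝕜) :
    HasDerivAt (fun w => ∑' n, a n * w ^ n) (∑' n, derivCoeff a n * z ^ n) z := by
  have hsplit : (fun w => ∑' n, a n * w ^ n) = fun w => a 0 + ∑' n, a (n + 1) * w ^ (n + 1) :=
    funext fun w => by simpa using (summable_mul_pow_of_radius_eq_top ha w).tsum_eq_zero_add
  rw [hsplit]
  refine HasDerivAt.const_add _ <| hasDerivAt_tsum_of_isPreconnected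
    (g := fun n w => a (n + 1) * w ^ (n + 1)) (g' := fun n w => derivCoeff a n * w ^ n)
    (summable_norm_mul_pow_of_radius_eq_top (radius_ofScalars_derivCoeff ha)
      (by positivity : (0 : ℝ) ≤ ‖z‖ + 1))
    Metric.isOpen_ball (convex_ball 0 (‖z‖ + 1)).isPreconnected (fun n w _ => ?_)
    (fun n w hw => ?_) (Metric.mem_ball_self (by positivity)) (by simp) (by simp)
  · have h := (hasDerivAt_pow (n + 1) w).const_mul (a (n + 1))
    rwa [Nat.add_sub_cancel, Nat.cast_add_one, ← mul_assoc, mul_comm (a _)] at h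
  · rw [mem_ball_zero_iff] at hw
    rw [norm_mul, norm_pow]
    gcongr

lemma tsum_mul_zero_pow (a : ℕ → 𝕜) : ∑' n, a n * 0 ^ n = a 0 :=
  (tsum_eq_single 0 fun n hn => by simp [hn]).trans (by simp)

end PowerSeries

section Airy

variable {α : ℕ → ℝ}

lemma airy_rec_add_three
    (hαrec : ∀ k : ℕ, 3 ≤ k → α k = -(α (k - 3) + α (k - 2)) / ((k : ℝ) * ((k : ℝ) - 1)))
    (n : ℕ) : ((n : ℝ) + 3) * ((n : ℝ) + 2) * α (n + 3) = -(α n + α (n + 1)) := by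
  have hden : ((n + 3 : ℕ) : ℝ) * ((n + 3 : ℕ) - 1) = (n + 3) * (n + 2) := by push_cast; ring
  rw [hαrec (n + 3) (by omega), Nat.add_sub_cancel, show n + 3 - 2 = n + 1 by omega, hden]
  field_simp

lemma sq_mul_factorial_le_of_airy_rec
    (hrec : ∀ n : ℕ, ((n : ℝ) + 3) * ((n : ℝ) + 2) * α (n + 3) = -(α n + α (n + 1)))
    {C : ℝ} (h0 : α 0 ^ 2 ≤ C) (h1 : α 1 ^ 2 ≤ 4 * C) (h2 : α 2 ^ 2 * 2 ≤ 16 * C) (n : ℕ) :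
    α n ^ 2 * n ! ≤ C * 4 ^ n := by
  suffices ∀ n, α n ^ 2 * n ! ≤ C * 4 ^ n ∧ α (n + 1) ^ 2 * (n + 1)! ≤ C * 4 ^ (n + 1) ∧
      α (n + 2) ^ 2 * (n + 2)! ≤ C * 4 ^ (n + 2) from (this n).1
  intro n
  induction n with
  | zero => refine ⟨?_, ?_, ?_⟩ <;> norm_num [Nat.factorial] <;> linarith
  | succ n ih =>
    obtain ⟨hn, hn1, hn2⟩ := ih
    refine ⟨hn1, hn2, ?_⟩
    have hF : (0 : ℝ) < n ! := by positivity
    have hm : (0 : ℝ) ≤ n := n.cast_nonneg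
    have hC : 0 ≤ C := (sq_nonneg _).trans h0
    rw [Nat.factorial_succ] at hn1
    rw [show n + 1 + 2 = n + 3 by ring, Nat.factorial_succ, Nat.factorial_succ, Nat.factorial_succ]
    push_cast at hn1 ⊢
    have hP : (0 : ℝ) < (n + 3) * (n + 2) := by positivity
    -- multiply through by `P = (n+3)(n+2)` and use `(x+y)^2 ≤ 2x^2 + 2y^2`
    refine le_of_mul_le_mul_left ?_ hP
    calc (n + 3) * (n + 2) * (α (n + 3) ^ 2 * ((n + 2 + 1) * ((n + 1 + 1) * ((n + 1) * n !))))
        = (α n + α (n + 1)) ^ 2 * ((n + 1) * n !) := by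
          rw [← neg_sq (α n + α (n + 1)), ← hrec]; ring
      _ ≤ 2 * (α n ^ 2 * n !) * (n + 1) + 2 * (α (n + 1) ^ 2 * ((n + 1) * n !)) := by
          nlinarith [sq_nonneg (α n - α (n + 1)), mul_pos (by positivity : (0 : ℝ) < n + 1) hF]
      _ ≤ 2 * (C * 4 ^ n) * (n + 1) + 2 * (C * 4 ^ (n + 1)) := by gcongr
      _ ≤ (n + 3) * (n + 2) * (C * 4 ^ (n + 1 + 2)) := by
          have : (0 : ℝ) ≤ C * 4 ^ n := by positivity
          rw [show (4 : ℝ) ^ (n + 1 + 2) = 4 ^ n * 64 by ring, pow_succ]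
          nlinarith [mul_nonneg this hm]

lemma airy_series_ode (hrad : (ofScalars ℝ α).radius = ⊤)
    (hrec : ∀ n : ℕ, ((n : ℝ) + 3) * ((n : ℝ) + 2) * α (n + 3) = -(α n + α (n + 1)))
    (h2 : 2 * α 2 = -α 0) (r : ℝ) :
    ∑' n, derivCoeff (derivCoeff α) n * r ^ n + (1 + r) * ∑' n, α n * r ^ n = 0 := by
  set c : ℕ → ℝ := fun n => derivCoeff (derivCoeff α) n + α n
  have hs2 := summable_mul_pow_of_radius_eq_top
    (radius_ofScalars_derivCoeff (radius_ofScalars_derivCoeff hrad)) r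
  have hs0 := summable_mul_pow_of_radius_eq_top hrad r
  have hsc : Summable fun n => c n * r ^ n := (hs2.add hs0).congr fun n => by simp only [c, add_mul]
  have hc0 : c 0 = 0 := by simp only [c, derivCoeff]; push_cast; linarith
  have hc : ∀ n, c (n + 1) * r ^ (n + 1) = -(r * (α n * r ^ n)) := fun n => by
    simp only [c, derivCoeff]; push_cast; linear_combination r ^ (n + 1) * hrec n
  have hsum : ∑' n, derivCoeff (derivCoeff α) n * r ^ n + ∑' n, α n * r ^ n
      = -(r * ∑' n, α n * r ^ n) := calc
    _ = ∑' n, c n * r ^ n := by rw [← hs2.tsum_add hs0]; simp only [c, add_mul]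
    _ = c 0 * r ^ 0 + ∑' n, c (n + 1) * r ^ (n + 1) := hsc.tsum_eq_zero_add
    _ = -(r * ∑' n, α n * r ^ n) := by
      simp only [hc0, hc, zero_mul, zero_add, tsum_neg, tsum_mul_left]
  linear_combination hsum

end Airy

lemma deriv_deriv_cexp_I_mul_mul (c : ℂ) (t : ℝ) :
    deriv (deriv fun s : ℝ => exp (I * s) * c) t = -(exp (I * t) * c) := by
  have hexp (s : ℝ) : HasDerivAt (fun s : ℝ => exp (I * s)) (I * exp (I * s)) s := by
    simpa [mul_comm] using ((hasDerivAt_id s).ofReal_comp.const_mul I).cexp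
  have hderiv : deriv (fun s : ℝ => exp (I * s) * c) = fun s : ℝ => I * (exp (I * s) * c) :=
    funext fun s => by rw [((hexp s).mul_const c).deriv, mul_assoc]
  rw [hderiv, (((hexp t).mul_const c).const_mul I).deriv]
  linear_combination exp (I * t) * c * I_mul_I

lemma deriv_deriv_mul_ofReal (E : ℂ) {f f' f'' : ℝ → ℝ} (hf : ∀ r, HasDerivAt f (f' r) r)
    (hf' : ∀ r, HasDerivAt f' (f'' r) r) (r : ℝ) :
    deriv (deriv fun s : ℝ => E * (f s : ℂ)) r = E * f'' r := by
  have hderiv : deriv (fun s : ℝ => E * (f s : ℂ)) = fun s => E * (f' s : ℂ) :=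
    funext fun s => ((hf s).ofReal_comp.const_mul E).deriv
  rw [hderiv]
  exact ((hf' r).ofReal_comp.const_mul E).deriv

/-- `ψ(r,t) = e^{it} ∑ α k r^k` with the Airy coefficients solves the
Klein-Gordon problem `ψ_rr - ψ_tt + r ψ = 0`, `ψ(0,t) = e^{it}`, `ψ_r(0,t) = 0`. -/
theorem airy_solution_klein_gordon
    (α : ℕ → ℝ) (hα0 : α 0 = 1) (hα1 : α 1 = 0) (hα2 : α 2 = -1/2)
    (hαrec : ∀ k : ℕ, 3 ≤ k → α k = -(α (k - 3) + α (k - 2)) / ((k : ℝ) * ((k : ℝ) - 1)))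
    (ψ : ℝ × ℝ → ℂ)
    (hψ : ∀ r t : ℝ, ψ (r, t) = Complex.exp (Complex.I * t) * ((∑' k : ℕ, α k * r ^ k : ℝ) : ℂ)) :
    (∀ r t : ℝ,
      deriv (deriv (fun r' : ℝ => ψ (r', t))) r
        - deriv (deriv (fun t' : ℝ => ψ (r, t'))) t
        + (r : ℂ) * ψ (r, t) = 0) ∧
    (∀ t : ℝ, ψ (0, t) = Complex.exp (Complex.I * t)) ∧
    (∀ t : ℝ, deriv (fun r' : ℝ => ψ (r', t)) 0 = 0) := by
  have hrec := airy_rec_add_three hαrec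
  have hrad : (ofScalars ℝ α).radius = ⊤ :=
    radius_ofScalars_eq_top_of_sq_mul_factorial_le (C := 1) (D := 4) fun n => by
      simpa using sq_mul_factorial_le_of_airy_rec hrec (C := 1) (by simp [hα0]) (by simp [hα1])
        (by norm_num [hα2]) n
  have hf := hasDerivAt_tsum_mul_pow hrad
  have hf' := hasDerivAt_tsum_mul_pow (radius_ofScalars_derivCoeff hrad)
  simp only [hψ]
  refine ⟨fun r t => ?_, fun t => ?_, fun t => ?_⟩
  · rw [deriv_deriv_mul_ofReal _ hf hf', deriv_deriv_cexp_I_mul_mul]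
    have hode := congrArg ofReal (airy_series_ode hrad hrec (by linarith) r)
    simp only [ofReal_add, ofReal_mul, ofReal_one, ofReal_zero] at hode
    linear_combination exp (I * t) * hode
  · simp [tsum_mul_zero_pow, hα0]
  · rw [((hf 0).ofReal_comp.const_mul _).deriv]
    simp [tsum_mul_zero_pow, derivCoeff, hα1]
end

section
/- Fix r ∈ ℝ and define b : ℕ → ℝ by b(0) = 0, b(1) = 1, b(2) = 0, and b(n+2) = -(b(n-1) + r·b(n))/((n+1)(n+2)) for all n ≥ 1. Then the series ∑_{n=0}^∞ b(n)·(s - r)^n converges absolutely for every s ∈ ℝ, and the function L(s) = ∑_{n=0}^∞ b(n)·(s - r)^n satisfies L''(s) + s·L(s) = 0 for all s ∈ ℝ, L(r) = 0, and L'(r) = 1. -/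
/-!
Write `x = s - r`. For every `q ≥ 0` the recurrence gives, once `(n + 2)(n + 3) ≥ q³ + |r| q²`,
`|b (n + 3)| q ^ (n + 3) ≤ max (|b n| q ^ n) (|b (n + 1)| q ^ (n + 1))`, so `|b n| q ^ n` is bounded
and `∑ b n x ^ n` converges absolutely everywhere, by comparison with a geometric series. Such a
power series may be differentiated termwise, and comparing coefficients of `x ^ (n + 1)` in
`y'' + (x + r) y = 0` gives back exactly the recurrence.
-/

open Filter

def IsEntireCoeffs (a : ℕ → ℝ) : Prop := ∀ x : ℝ, Summable fun n => |a n * x ^ n|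

noncomputable def powerSeriesSum (a : ℕ → ℝ) (x : ℝ) : ℝ := ∑' n, a n * x ^ n

def derivCoeffs (a : ℕ → ℝ) (n : ℕ) : ℝ := (n + 1) * a (n + 1)

theorem powerSeriesSum_zero (a : ℕ → ℝ) : powerSeriesSum a 0 = a 0 := by
  rw [powerSeriesSum, tsum_eq_single 0 fun n hn => by simp [hn], pow_zero, mul_one]

theorem bddAbove_range_of_eventually_le_max {u : ℕ → ℝ}
    (h : ∀ᶠ n in atTop, u (n + 3) ≤ max (u n) (u (n + 1))) : BddAbove (Set.range u) := by
  obtain ⟨N, hN⟩ := eventually_atTop.1 h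
  refine ⟨∑ k ∈ Finset.range (N + 3), |u k|, Set.forall_mem_range.2 fun n => ?_⟩
  induction n using Nat.strong_induction_on with
  | _ n ih =>
    by_cases hn : n < N + 3
    · exact (le_abs_self _).trans
        (Finset.single_le_sum (fun k _ => abs_nonneg (u k)) (Finset.mem_range.2 hn))
    · obtain ⟨k, rfl⟩ : ∃ k, n = k + 3 := ⟨n - 3, by omega⟩
      exact (hN k (by omega)).trans (max_le (ih k (by omega)) (ih (k + 1) (by omega)))

namespace IsEntireCoeffs

variable {a : ℕ → ℝ}

theorem of_bddAbove (h : ∀ q : ℝ, 0 ≤ q → BddAbove (Set.range fun n => |a n| * q ^ n)) :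
    IsEntireCoeffs a := by
  intro x
  obtain ⟨C, hC⟩ := h (|x| + 1) (by positivity)
  have hx : 0 < |x| + 1 := by positivity
  have hratio : |x| / (|x| + 1) < 1 := (div_lt_one hx).2 (lt_add_one _)
  refine .of_nonneg_of_le (fun n => abs_nonneg _) (fun n => ?_)
    ((summable_geometric_of_lt_one (by positivity) hratio).mul_left C)
  calc |a n * x ^ n| = (|a n| * (|x| + 1) ^ n) * (|x| / (|x| + 1)) ^ n := by
        rw [abs_mul, abs_pow, div_pow]; field_simp
    _ ≤ C * (|x| / (|x| + 1)) ^ n := by gcongr; exact hC ⟨n, rfl⟩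

theorem summable (ha : IsEntireCoeffs a) (x : ℝ) : Summable fun n => a n * x ^ n :=
  (ha x).of_abs

theorem derivCoeffs (ha : IsEntireCoeffs a) : IsEntireCoeffs (derivCoeffs a) := by
  intro x
  set R := 2 * |x| + 1
  have hR : 1 ≤ R := by simp only [R]; linarith [abs_nonneg x]
  refine .of_nonneg_of_le (fun n => abs_nonneg _) (fun n => ?_)
    ((summable_nat_add_iff 1).2 (ha R))
  have hn : (n : ℝ) + 1 ≤ 2 ^ n := by exact_mod_cast Nat.lt_two_pow_self
  calc |_root_.derivCoeffs a n * x ^ n| = |a (n + 1)| * (((n : ℝ) + 1) * |x| ^ n) := by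
        rw [_root_.derivCoeffs, abs_mul, abs_mul, abs_pow, abs_of_pos (by positivity)]; ring
    _ ≤ |a (n + 1)| * R ^ (n + 1) := by
        gcongr
        calc ((n : ℝ) + 1) * |x| ^ n ≤ 2 ^ n * |x| ^ n := by gcongr
          _ = (2 * |x|) ^ n := (mul_pow _ _ _).symm
          _ ≤ R ^ n := by gcongr; simp only [R]; linarith
          _ ≤ R ^ (n + 1) := pow_le_pow_right₀ hR n.le_succ
    _ = |a (n + 1) * R ^ (n + 1)| := by
        rw [abs_mul, abs_of_pos (by positivity : 0 < R ^ (n + 1))]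

end IsEntireCoeffs

theorem hasDerivAt_powerSeriesSum {a : ℕ → ℝ} (ha : IsEntireCoeffs a) (x : ℝ) :
    HasDerivAt (powerSeriesSum a) (powerSeriesSum (derivCoeffs a) x) x := by
  have hsplit : powerSeriesSum a = fun y => a 0 + ∑' n, a (n + 1) * y ^ (n + 1) :=
    funext fun y => by simpa [powerSeriesSum] using (ha.summable y).tsum_eq_zero_add
  rw [hsplit]
  refine .const_add _ <| hasDerivAt_tsum_of_isPreconnected (ha.derivCoeffs (|x| + 1))
    Metric.isOpen_ball (convex_ball 0 (|x| + 1)).isPreconnected (y₀ := 0)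
    (g' := fun n y => derivCoeffs a n * y ^ n) (fun n y _ => ?_) (fun n y hy => ?_)
    (Metric.mem_ball_self (by positivity)) (by simp) (by simp)
  · refine ((hasDerivAt_pow (n + 1) y).const_mul (a (n + 1))).congr_deriv ?_
    simp only [derivCoeffs, Nat.add_sub_cancel]; push_cast; ring
  · rw [mem_ball_zero_iff, Real.norm_eq_abs] at hy
    rw [Real.norm_eq_abs, abs_mul, abs_mul, abs_pow, abs_pow,
      abs_of_pos (by positivity : 0 < |x| + 1)]
    gcongr

theorem deriv_powerSeriesSum {a : ℕ → ℝ} (ha : IsEntireCoeffs a) :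
    deriv (powerSeriesSum a) = powerSeriesSum (derivCoeffs a) :=
  funext fun x => (hasDerivAt_powerSeriesSum ha x).deriv

section Recurrence

variable {a : ℕ → ℝ} {r : ℝ}

theorem eventually_abs_mul_pow_le_max
    (hrec : ∀ n : ℕ, ((n : ℝ) + 2) * (n + 3) * a (n + 3) + r * a (n + 1) + a n = 0)
    {q : ℝ} (hq : 0 ≤ q) :
    ∀ᶠ n in atTop, |a (n + 3)| * q ^ (n + 3) ≤ max (|a n| * q ^ n) (|a (n + 1)| * q ^ (n + 1)) := by
  filter_upwards [eventually_ge_atTop ⌈q ^ 3 + |r| * q ^ 2⌉₊] with n hn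
  set M := max (|a n| * q ^ n) (|a (n + 1)| * q ^ (n + 1))
  have hpos : (0 : ℝ) < (n + 2) * (n + 3) := by positivity
  have hbig : q ^ 3 + |r| * q ^ 2 ≤ (n + 2) * (n + 3) := by
    have := Nat.ceil_le.1 hn
    nlinarith [(n.cast_nonneg : (0 : ℝ) ≤ n)]
  refine le_of_mul_le_mul_left ?_ hpos
  calc ((n : ℝ) + 2) * (n + 3) * (|a (n + 3)| * q ^ (n + 3))
      = |a n + r * a (n + 1)| * q ^ (n + 3) := by
        rw [← mul_assoc, ← abs_of_pos hpos, ← abs_mul,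
          show ((n : ℝ) + 2) * (n + 3) * a (n + 3) = -(a n + r * a (n + 1)) by
            linear_combination hrec n, abs_neg]
    _ ≤ (|a n| + |r| * |a (n + 1)|) * q ^ (n + 3) := by
        gcongr; exact (abs_add_le _ _).trans_eq (by rw [abs_mul])
    _ = q ^ 3 * (|a n| * q ^ n) + |r| * q ^ 2 * (|a (n + 1)| * q ^ (n + 1)) := by ring
    _ ≤ q ^ 3 * M + |r| * q ^ 2 * M := by gcongr; exacts [le_max_left _ _, le_max_right _ _]
    _ ≤ (n + 2) * (n + 3) * M := by
        rw [← add_mul]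
        exact mul_le_mul_of_nonneg_right hbig
          ((by positivity : (0 : ℝ) ≤ |a n| * q ^ n).trans (le_max_left _ _))

theorem isEntireCoeffs_of_recurrence
    (hrec : ∀ n : ℕ, ((n : ℝ) + 2) * (n + 3) * a (n + 3) + r * a (n + 1) + a n = 0) :
    IsEntireCoeffs a :=
  .of_bddAbove fun _ hq =>
    bddAbove_range_of_eventually_le_max (eventually_abs_mul_pow_le_max hrec hq)

theorem powerSeriesSum_derivCoeffs_derivCoeffs_add_mul
    (hrec : ∀ n : ℕ, ((n : ℝ) + 2) * (n + 3) * a (n + 3) + r * a (n + 1) + a n = 0)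
    (h0 : 2 * a 2 + r * a 0 = 0) (x : ℝ) :
    powerSeriesSum (derivCoeffs (derivCoeffs a)) x + (x + r) * powerSeriesSum a x = 0 := by
  have ha := isEntireCoeffs_of_recurrence hrec
  set D := derivCoeffs (derivCoeffs a)
  have hD : ∀ n : ℕ, D n = ((n : ℝ) + 1) * ((n + 2) * a (n + 2)) := by
    intro n; simp only [D, derivCoeffs]; push_cast; ring
  have hsum : HasSum (fun n => (D n + r * a n) * x ^ n)
      (powerSeriesSum D x + r * powerSeriesSum a x) := by
    have hterm : (fun n => (D n + r * a n) * x ^ n) = fun n => D n * x ^ n + r * (a n * x ^ n) := by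
      funext n; ring
    rw [hterm]
    exact (ha.derivCoeffs.derivCoeffs.summable x).hasSum.add ((ha.summable x).hasSum.mul_left r)
  have hshift : HasSum (fun n => (D (n + 1) + r * a (n + 1)) * x ^ (n + 1))
      (-(x * powerSeriesSum a x)) := by
    have hterm : (fun n => (D (n + 1) + r * a (n + 1)) * x ^ (n + 1)) =
        fun n => -(x * (a n * x ^ n)) := by
      funext n
      rw [hD]; push_cast
      linear_combination x ^ (n + 1) * hrec n
    rw [hterm]
    exact ((ha.summable x).hasSum.mul_left x).neg
  rw [← hasSum_nat_add_iff' 1, Finset.sum_range_one, hD, pow_zero] at hsum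
  have := hsum.unique hshift
  push_cast at this
  linear_combination this + h0

end Recurrence

/-- The Lagrange multiplier series `L(s) = ∑ b n (s - r)^n`, with
`b 0 = 0, b 1 = 1, b 2 = 0` and `b (n+2) = -(b (n-1) + r b n)/((n+1)(n+2))` for `n ≥ 1`,
converges absolutely for every `s` and satisfies `L'' + s L = 0`, `L r = 0`, `L' r = 1`. -/
theorem lagrange_multiplier_airy
    (r : ℝ) (b : ℕ → ℝ) (hb0 : b 0 = 0) (hb1 : b 1 = 1) (hb2 : b 2 = 0)
    (hbrec : ∀ n : ℕ, 1 ≤ n →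
      b (n + 2) = -(b (n - 1) + r * b n) / (((n : ℝ) + 1) * ((n : ℝ) + 2)))
    (L : ℝ → ℝ) (hL : ∀ s : ℝ, L s = ∑' n : ℕ, b n * (s - r) ^ n) :
    (∀ s : ℝ, Summable (fun n : ℕ => |b n * (s - r) ^ n|)) ∧
    (∀ s : ℝ, deriv (deriv L) s + s * L s = 0) ∧
    L r = 0 ∧ deriv L r = 1 := by
  have hrec : ∀ n : ℕ, ((n : ℝ) + 2) * (n + 3) * b (n + 3) + r * b (n + 1) + b n = 0 := by
    intro n
    have h := hbrec (n + 1) (Nat.le_add_left 1 n)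
    rw [Nat.add_sub_cancel] at h
    push_cast at h
    rw [h]
    field_simp
    ring
  have hb := isEntireCoeffs_of_recurrence hrec
  have hLP : L = fun s => powerSeriesSum b (s - r) := funext hL
  have hL' : deriv L = fun s => powerSeriesSum (derivCoeffs b) (s - r) := by
    funext s; rw [hLP, deriv_comp_sub_const, deriv_powerSeriesSum hb]
  have hL'' : ∀ s, deriv (deriv L) s = powerSeriesSum (derivCoeffs (derivCoeffs b)) (s - r) := by
    intro s; rw [hL', deriv_comp_sub_const, deriv_powerSeriesSum hb.derivCoeffs]
  refine ⟨fun s => hb (s - r), fun s => ?_, ?_, ?_⟩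
  · have h := powerSeriesSum_derivCoeffs_derivCoeffs_add_mul hrec (by rw [hb0, hb2]; ring) (s - r)
    rw [sub_add_cancel] at h
    rw [hL'', hLP]
    exact h
  · simp only [hLP, sub_self, powerSeriesSum_zero, hb0]
  · simp only [hL', sub_self, powerSeriesSum_zero, derivCoeffs, hb1]
    norm_num
end

section
/- Let k ≥ 6 be an integer and let a : ℕ → ℝ. If a(k-3) = -(a(k-6) + a(k-5))/((k-3)(k-4)), then (a(k-6) + a(k-5))/((k-1)(k-2)(k-3)(k-4)) + 2·a(k-3)/(k(k-1)(k-2)) - a(k-2)/(k(k-1)) = -(a(k-3) + a(k-2))/(k(k-1)). -/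
/-- If `a` satisfies the Airy recursion at index `k - 3`, then the VIM
coefficient recursion at index `k ≥ 6` produces the Airy recursion value at index `k`. -/
theorem vim_recursion_preserves_airy
    (k : ℕ) (hk : 6 ≤ k) (a : ℕ → ℝ)
    (h : a (k - 3) = -(a (k - 6) + a (k - 5)) / (((k : ℝ) - 3) * ((k : ℝ) - 4))) :
    (a (k - 6) + a (k - 5)) / (((k : ℝ) - 1) * ((k : ℝ) - 2) * ((k : ℝ) - 3) * ((k : ℝ) - 4))
      + 2 * a (k - 3) / ((k : ℝ) * ((k : ℝ) - 1) * ((k : ℝ) - 2))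
      - a (k - 2) / ((k : ℝ) * ((k : ℝ) - 1))
    = -(a (k - 3) + a (k - 2)) / ((k : ℝ) * ((k : ℝ) - 1)) := by
  have hk' : (6 : ℝ) ≤ (k : ℝ) := by exact_mod_cast hk
  have h0 : (k : ℝ) ≠ 0 := by linarith
  have h1 : (k : ℝ) - 1 ≠ 0 := by linarith
  have h2 : (k : ℝ) - 2 ≠ 0 := by linarith
  have h3 : (k : ℝ) - 3 ≠ 0 := by linarith
  have h4 : (k : ℝ) - 4 ≠ 0 := by linarith
  rw [h]
  field_simp
  ring
end

section
/- Define the Airy coefficients α : ℕ → ℝ by α(0) = 1, α(1) = 0, α(2) = -1/2, and α(k) = -(α(k-3) + α(k-2))/(k(k-1)) for all k ≥ 3. Let m ≥ 4 be an integer and let a, b : ℕ → ℝ satisfy: a(k) = α(k) for all k ≤ m; b(k) = α(k) for all k ≤ 5; and b(k) = (a(k-6) + a(k-5))/((k-1)(k-2)(k-3)(k-4)) + 2·a(k-3)/(k(k-1)(k-2)) - a(k-2)/(k(k-1)) for all k ≥ 6. Then b(k) = α(k) for all k ≤ m + 2. -/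
/-- Lemma 4.1: if one VIM iterate agrees with the Airy coefficients up
to index `m ≥ 4`, then the next iterate agrees with them up to index `m + 2`. -/
theorem vim_iterate_gains_two_airy_coefficients
    (α : ℕ → ℝ) (hα0 : α 0 = 1) (hα1 : α 1 = 0) (hα2 : α 2 = -1/2)
    (hαrec : ∀ k : ℕ, 3 ≤ k → α k = -(α (k - 3) + α (k - 2)) / ((k : ℝ) * ((k : ℝ) - 1)))
    (m : ℕ) (hm : 4 ≤ m) (a b : ℕ → ℝ)
    (ha : ∀ k ≤ m, a k = α k)
    (hb_low : ∀ k ≤ 5, b k = α k)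
    (hb_rec : ∀ k : ℕ, 6 ≤ k →
      b k = (a (k - 6) + a (k - 5)) /
              (((k : ℝ) - 1) * ((k : ℝ) - 2) * ((k : ℝ) - 3) * ((k : ℝ) - 4))
            + 2 * a (k - 3) / ((k : ℝ) * ((k : ℝ) - 1) * ((k : ℝ) - 2))
            - a (k - 2) / ((k : ℝ) * ((k : ℝ) - 1))) :
    ∀ k ≤ m + 2, b k = α k := by
  intro k hk
  by_cases h5 : k ≤ 5
  · exact hb_low k h5
  · have hk6 : 6 ≤ k := by omega
    have h1 : k - 6 ≤ m := by omega
    have h2 : k - 5 ≤ m := by omega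
    have h3 : k - 3 ≤ m := by omega
    have h4 : k - 2 ≤ m := by omega
    rw [hb_rec k hk6, ha _ h1, ha _ h2, ha _ h3, ha _ h4]
    have hA := hαrec k (by omega)
    have hB := hαrec (k - 3) (by omega)
    have e1 : k - 3 - 3 = k - 6 := by omega
    have e2 : k - 3 - 2 = k - 5 := by omega
    rw [e1, e2] at hB
    have hc : ((k - 3 : ℕ) : ℝ) = (k : ℝ) - 3 := by
      have h3k : (3:ℕ) ≤ k := by omega
      push_cast [Nat.cast_sub h3k]
      ring
    rw [hc] at hB
    have hx : (6:ℝ) ≤ (k:ℝ) := by exact_mod_cast hk6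
    have h0 : (k:ℝ) ≠ 0 := by linarith
    have hn1 : (k:ℝ) - 1 ≠ 0 := by linarith
    have hn2 : (k:ℝ) - 2 ≠ 0 := by linarith
    have hn3 : (k:ℝ) - 3 ≠ 0 := by linarith
    have hn4 : (k:ℝ) - 4 ≠ 0 := by linarith
    have hn34 : ((k:ℝ) - 3) - 1 ≠ 0 := by linarith
    have hsum : α (k - 6) + α (k - 5) = -(((k:ℝ) - 3) * (((k:ℝ) - 3) - 1)) * α (k - 3) := by
      field_simp at hB
      linarith [hB]
    rw [hsum, hA]
    field_simp
    ring
end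

section
/- Let a : ℕ → ℕ → ℝ (write a n k for the k-th coefficient of the n-th iterate) satisfy: |a 0 k| ≤ 1 for all k; for every n, |a (n+1) k| ≤ 1 for all k ≤ 5; and for every n and every k ≥ 6, a (n+1) k = (a n (k-6) + a n (k-5))/((k-1)(k-2)(k-3)(k-4)) + 2·(a n (k-3))/(k(k-1)(k-2)) - (a n (k-2))/(k(k-1)). Then |a n k| ≤ 1 for all n and all k. -/
lemma vim_aux (K b1 b2 b3 b4 : ℝ) (hK : (6:ℝ) ≤ K)
    (h1 : |b1| ≤ 1) (h2 : |b2| ≤ 1) (h3 : |b3| ≤ 1) (h4 : |b4| ≤ 1) :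
    |(b1 + b2) / ((K - 1) * (K - 2) * (K - 3) * (K - 4))
      + 2 * b3 / (K * (K - 1) * (K - 2)) - b4 / (K * (K - 1))| ≤ 1 := by
  have a1 : (20:ℝ) ≤ (K - 1) * (K - 2) := by nlinarith
  have a2 : (6:ℝ) ≤ (K - 3) * (K - 4) := by nlinarith
  have d3 : (30:ℝ) ≤ K * (K - 1) := by nlinarith
  have d1 : (120:ℝ) ≤ (K - 1) * (K - 2) * (K - 3) * (K - 4) := by
    nlinarith [mul_le_mul a1 a2 (by norm_num : (0:ℝ) ≤ 6) (by linarith : (0:ℝ) ≤ (K - 1) * (K - 2))]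
  have d2 : (120:ℝ) ≤ K * (K - 1) * (K - 2) := by
    nlinarith [mul_le_mul d3 (show (4:ℝ) ≤ K - 2 by linarith) (by norm_num : (0:ℝ) ≤ 4) (by linarith : (0:ℝ) ≤ K * (K - 1))]
  have e1 : |(b1 + b2) / ((K - 1) * (K - 2) * (K - 3) * (K - 4))| ≤ 2 / 120 := by
    rw [abs_div]
    rw [abs_of_pos (by linarith : (0:ℝ) < (K - 1) * (K - 2) * (K - 3) * (K - 4))]
    exact div_le_div₀ (by norm_num) ((abs_add_le _ _).trans (by linarith)) (by norm_num) d1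
  have e2 : |2 * b3 / (K * (K - 1) * (K - 2))| ≤ 2 / 120 := by
    rw [abs_div, abs_mul]
    rw [abs_of_pos (by linarith : (0:ℝ) < K * (K - 1) * (K - 2))]
    have : |(2:ℝ)| * |b3| ≤ 2 := by rw [abs_two]; nlinarith [abs_nonneg b3]
    exact div_le_div₀ (by norm_num) this (by norm_num) d2
  have e3 : |b4 / (K * (K - 1))| ≤ 1 / 30 := by
    rw [abs_div]
    rw [abs_of_pos (by linarith : (0:ℝ) < K * (K - 1))]
    exact div_le_div₀ (by norm_num) h4 (by norm_num) d3
  calc |(b1 + b2) / ((K - 1) * (K - 2) * (K - 3) * (K - 4))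
      + 2 * b3 / (K * (K - 1) * (K - 2)) - b4 / (K * (K - 1))|
      ≤ |(b1 + b2) / ((K - 1) * (K - 2) * (K - 3) * (K - 4))
      + 2 * b3 / (K * (K - 1) * (K - 2))| + |b4 / (K * (K - 1))| := abs_sub _ _
    _ ≤ |(b1 + b2) / ((K - 1) * (K - 2) * (K - 3) * (K - 4))|
      + |2 * b3 / (K * (K - 1) * (K - 2))| + |b4 / (K * (K - 1))| := by
        linarith [abs_add_le ((b1 + b2) / ((K - 1) * (K - 2) * (K - 3) * (K - 4)))
          (2 * b3 / (K * (K - 1) * (K - 2)))]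
    _ ≤ 2 / 120 + 2 / 120 + 1 / 30 := by linarith
    _ ≤ 1 := by norm_num

/-- Lemma 4.3: all power-series coefficients of all VIM iterates are
bounded by `1` in absolute value. -/
theorem vim_coefficients_bounded_by_one
    (a : ℕ → ℕ → ℝ)
    (h0 : ∀ k, |a 0 k| ≤ 1)
    (hlow : ∀ n, ∀ k ≤ 5, |a (n + 1) k| ≤ 1)
    (hrec : ∀ n, ∀ k : ℕ, 6 ≤ k →
      a (n + 1) k = (a n (k - 6) + a n (k - 5)) /
              (((k : ℝ) - 1) * ((k : ℝ) - 2) * ((k : ℝ) - 3) * ((k : ℝ) - 4))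
            + 2 * a n (k - 3) / ((k : ℝ) * ((k : ℝ) - 1) * ((k : ℝ) - 2))
            - a n (k - 2) / ((k : ℝ) * ((k : ℝ) - 1))) :
    ∀ n k, |a n k| ≤ 1 := by
  intro n
  induction n with
  | zero => exact h0
  | succ n ih =>
    intro k
    by_cases hk : k ≤ 5
    · exact hlow n k hk
    · have hk6 : 6 ≤ k := by omega
      rw [hrec n k hk6]
      exact vim_aux ((k : ℝ)) _ _ _ _ (by exact_mod_cast hk6) (ih _) (ih _) (ih _) (ih _)
end

section
/- Let a : ℕ → ℕ → ℝ (write a n k for the k-th coefficient of the n-th iterate) satisfy: |a n k| ≤ 1 for all n and k, and for every n and every k ≥ 6, a (n+1) k = (a n (k-6) + a n (k-5))/((k-1)(k-2)(k-3)(k-4)) + 2·(a n (k-3))/(k(k-1)(k-2)) - (a n (k-2))/(k(k-1)). Then for every m ≥ 1, every j ∈ {0,1,2,3,4,5}, and every n ≥ m, setting k = 6m + j one has |a n k| ≤ 2^m / ∏_{i=0}^{m-1} ((k - 6i - 1)(k - 6i - 2)). -/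
open Finset

private def vimF (m x : ℕ) : ℝ :=
  ∏ i ∈ Finset.range m, (((x : ℕ) : ℝ) - 6 * (i : ℝ) - 1) * (((x : ℕ) : ℝ) - 6 * (i : ℝ) - 2)

private lemma one_le_vimF (m x : ℕ) (hx : 6 * m ≤ x) : 1 ≤ vimF m x := by
  rw [vimF]
  calc (1 : ℝ) = ∏ _i ∈ Finset.range m, 1 := by simp
    _ ≤ _ := by
      refine Finset.prod_le_prod (by simp) fun i hi => ?_
      have hi' : 6 * i + 6 ≤ x := by have := Finset.mem_range.mp hi; omega
      have h : (6 * (i : ℝ) + 6) ≤ (x : ℝ) := by exact_mod_cast hi'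
      nlinarith

private lemma vimF_mono (m x y : ℕ) (hx : 6 * m ≤ x) (hxy : x ≤ y) : vimF m x ≤ vimF m y := by
  refine Finset.prod_le_prod (fun i hi => ?_) (fun i hi => ?_)
  · have hi' : 6 * i + 6 ≤ x := by have := Finset.mem_range.mp hi; omega
    have h : (6 * (i : ℝ) + 6) ≤ (x : ℝ) := by exact_mod_cast hi'
    nlinarith
  · have hi' : 6 * i + 6 ≤ x := by have := Finset.mem_range.mp hi; omega
    have h1 : (6 * (i : ℝ) + 6) ≤ (x : ℝ) := by exact_mod_cast hi'
    have h2 : (x : ℝ) ≤ (y : ℝ) := by exact_mod_cast hxy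
    nlinarith

private lemma vim_key
    (a : ℕ → ℕ → ℝ)
    (hbound : ∀ n k, |a n k| ≤ 1)
    (hrec : ∀ n, ∀ k : ℕ, 6 ≤ k →
      a (n + 1) k = (a n (k - 6) + a n (k - 5)) /
              (((k : ℝ) - 1) * ((k : ℝ) - 2) * ((k : ℝ) - 3) * ((k : ℝ) - 4))
            + 2 * a n (k - 3) / ((k : ℝ) * ((k : ℝ) - 1) * ((k : ℝ) - 2))
            - a n (k - 2) / ((k : ℝ) * ((k : ℝ) - 1))) :
    ∀ m k : ℕ, 6 * m ≤ k → ∀ n, m ≤ n → |a n k| ≤ 2 ^ m / vimF m k := by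
  intro m
  induction m with
  | zero => intro k _ n _; simpa [vimF] using hbound n k
  | succ m ih =>
    intro k hk n hn
    obtain ⟨n', rfl⟩ : ∃ n', n = n' + 1 := ⟨n - 1, by omega⟩
    have hk6 : 6 ≤ k := by omega
    rw [hrec n' k hk6]
    set K : ℝ := (k : ℝ) with hKdef
    have hK : (6 : ℝ) ≤ K := by rw [hKdef]; exact_mod_cast hk6
    have hFpos : (0 : ℝ) < vimF m (k - 6) :=
      lt_of_lt_of_le one_pos (one_le_vimF m (k - 6) (by omega))
    set Q : ℝ := 2 ^ m / vimF m (k - 6) with hQdef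
    have hQpos : 0 < Q := div_pos (by positivity) hFpos
    -- coefficient bounds from the inductive hypothesis
    have hstep : ∀ x, k - 6 ≤ x → |a n' x| ≤ Q := by
      intro x hx
      refine (ih x (by omega) n' (by omega)).trans ?_
      rw [hQdef]
      gcongr
      exact vimF_mono m (k - 6) x (by omega) hx
    have h6 := hstep (k - 6) le_rfl
    have h5 := hstep (k - 5) (by omega)
    have h3 := hstep (k - 3) (by omega)
    have h2 := hstep (k - 2) (by omega)
    -- denominators
    have c0 : (0 : ℝ) < K := by linarith
    have c1 : (0 : ℝ) < K - 1 := by linarith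
    have c2 : (0 : ℝ) < K - 2 := by linarith
    have c3 : (0 : ℝ) < K - 3 := by linarith
    have c4 : (0 : ℝ) < K - 4 := by linarith
    have hD1 : (0 : ℝ) < (K - 1) * (K - 2) * (K - 3) * (K - 4) :=
      mul_pos (mul_pos (mul_pos c1 c2) c3) c4
    have hD2 : (0 : ℝ) < K * (K - 1) * (K - 2) := mul_pos (mul_pos c0 c1) c2
    have hD3 : (0 : ℝ) < K * (K - 1) := mul_pos c0 c1
    have hW : (0 : ℝ) < (K - 1) * (K - 2) := mul_pos c1 c2
    -- triangle inequality
    have tri : |(a n' (k - 6) + a n' (k - 5)) / ((K - 1) * (K - 2) * (K - 3) * (K - 4))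
            + 2 * a n' (k - 3) / (K * (K - 1) * (K - 2))
            - a n' (k - 2) / (K * (K - 1))| ≤
        (Q + Q) / ((K - 1) * (K - 2) * (K - 3) * (K - 4))
            + 2 * Q / (K * (K - 1) * (K - 2)) + Q / (K * (K - 1)) := by
      have t1 : |(a n' (k - 6) + a n' (k - 5)) / ((K - 1) * (K - 2) * (K - 3) * (K - 4))| ≤
          (Q + Q) / ((K - 1) * (K - 2) * (K - 3) * (K - 4)) := by
        rw [abs_div, abs_of_pos hD1]
        gcongr
        exact (abs_add_le _ _).trans (add_le_add h6 h5)
      have t2 : |2 * a n' (k - 3) / (K * (K - 1) * (K - 2))| ≤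
          2 * Q / (K * (K - 1) * (K - 2)) := by
        rw [abs_div, abs_of_pos hD2, abs_mul, abs_two]
        gcongr
      have t3 : |a n' (k - 2) / (K * (K - 1))| ≤ Q / (K * (K - 1)) := by
        rw [abs_div, abs_of_pos hD3]
        gcongr
      calc |_ + _ - _| ≤ |(a n' (k - 6) + a n' (k - 5)) / ((K - 1) * (K - 2) * (K - 3) * (K - 4))
            + 2 * a n' (k - 3) / (K * (K - 1) * (K - 2))| + |a n' (k - 2) / (K * (K - 1))| :=
          abs_sub _ _
        _ ≤ _ := by
          have := abs_add_le ((a n' (k - 6) + a n' (k - 5)) / ((K - 1) * (K - 2) * (K - 3) * (K - 4)))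
            (2 * a n' (k - 3) / (K * (K - 1) * (K - 2)))
          linarith
    refine tri.trans ?_
    -- rewrite the right-hand side
    have hFsucc : vimF (m + 1) k = vimF m (k - 6) * ((K - 1) * (K - 2)) := by
      simp only [vimF]
      rw [Finset.prod_range_succ']
      have hc : ((k - 6 : ℕ) : ℝ) = K - 6 := by
        rw [hKdef]; push_cast [hk6]; ring
      congr 1
      · refine Finset.prod_congr rfl fun i _ => ?_
        rw [hc]
        push_cast
        ring
      · push_cast
        ring
    have hRHS : (2 : ℝ) ^ (m + 1) / vimF (m + 1) k = 2 * Q / ((K - 1) * (K - 2)) := by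
      rw [hFsucc, pow_succ, hQdef]
      field_simp
    rw [hRHS]
    -- scalar inequality
    have scalar : 2 / ((K - 1) * (K - 2) * (K - 3) * (K - 4)) + 2 / (K * (K - 1) * (K - 2))
        + 1 / (K * (K - 1)) ≤ 2 / ((K - 1) * (K - 2)) := by
      have hpos : (0 : ℝ) < K * (K - 1) * (K - 2) * (K - 3) * (K - 4) :=
        mul_pos (mul_pos hD2 c3) c4
      have hid : 2 / ((K - 1) * (K - 2)) -
          (2 / ((K - 1) * (K - 2) * (K - 3) * (K - 4)) + 2 / (K * (K - 1) * (K - 2))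
            + 1 / (K * (K - 1))) =
          (K * ((K - 3) * (K - 4) - 2)) / (K * (K - 1) * (K - 2) * (K - 3) * (K - 4)) := by
        field_simp
        ring
      have hnum : (0 : ℝ) ≤ K * ((K - 3) * (K - 4) - 2) := by nlinarith
      have := div_nonneg hnum hpos.le
      linarith
    calc (Q + Q) / ((K - 1) * (K - 2) * (K - 3) * (K - 4))
          + 2 * Q / (K * (K - 1) * (K - 2)) + Q / (K * (K - 1))
        = Q * (2 / ((K - 1) * (K - 2) * (K - 3) * (K - 4)) + 2 / (K * (K - 1) * (K - 2))
            + 1 / (K * (K - 1))) := by ring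
      _ ≤ Q * (2 / ((K - 1) * (K - 2))) := mul_le_mul_of_nonneg_left scalar hQpos.le
      _ = 2 * Q / ((K - 1) * (K - 2)) := by ring

/-- Lemma 4.4: with `k = 6m + j`, `j ∈ {0,…,5}`, and `n ≥ m ≥ 1`,
the VIM coefficients satisfy `|a n k| ≤ 2^m / ∏_{i=0}^{m-1} (k-6i-1)(k-6i-2)`. -/
theorem vim_coefficient_decay
    (a : ℕ → ℕ → ℝ)
    (hbound : ∀ n k, |a n k| ≤ 1)
    (hrec : ∀ n, ∀ k : ℕ, 6 ≤ k →
      a (n + 1) k = (a n (k - 6) + a n (k - 5)) /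
              (((k : ℝ) - 1) * ((k : ℝ) - 2) * ((k : ℝ) - 3) * ((k : ℝ) - 4))
            + 2 * a n (k - 3) / ((k : ℝ) * ((k : ℝ) - 1) * ((k : ℝ) - 2))
            - a n (k - 2) / ((k : ℝ) * ((k : ℝ) - 1))) :
    ∀ m : ℕ, 1 ≤ m → ∀ j ≤ 5, ∀ n : ℕ, m ≤ n →
      |a n (6 * m + j)| ≤ 2 ^ m /
        ∏ i ∈ Finset.range m,
          ((((6 * m + j : ℕ) : ℝ) - 6 * (i : ℝ) - 1) *
           (((6 * m + j : ℕ) : ℝ) - 6 * (i : ℝ) - 2)) := by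
  intro m _ j _ n hn
  exact vim_key a hbound hrec m (6 * m + j) (by omega) n hn
end

section
/- Define the Airy coefficients α : ℕ → ℝ by α(0) = 1, α(1) = 0, α(2) = -1/2, and α(k) = -(α(k-3) + α(k-2))/(k(k-1)) for all k ≥ 3. Let a : ℕ → ℕ → ℝ satisfy: a 2 k = α(k) for all k ≤ 5; and for every n ≥ 2, a (n+1) k = α(k) for all k ≤ 5 and a (n+1) k = (a n (k-6) + a n (k-5))/((k-1)(k-2)(k-3)(k-4)) + 2·(a n (k-3))/(k(k-1)(k-2)) - (a n (k-2))/(k(k-1)) for all k ≥ 6. Then for every n ≥ 2 and every k ≤ 2n + 1, a n k = α(k). -/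
/-- iterated Lemma 4.1: starting at iterate `n = 2` with the first six
Airy coefficients, each VIM iteration extends the agreement with the Airy coefficients
by two indices: `a n k = α k` for all `k ≤ 2n + 1`, `n ≥ 2`. -/
theorem vim_iterates_agree_with_airy
    (α : ℕ → ℝ) (hα0 : α 0 = 1) (hα1 : α 1 = 0) (hα2 : α 2 = -1/2)
    (hαrec : ∀ k : ℕ, 3 ≤ k → α k = -(α (k - 3) + α (k - 2)) / ((k : ℝ) * ((k : ℝ) - 1)))
    (a : ℕ → ℕ → ℝ)
    (hbase : ∀ k ≤ 5, a 2 k = α k)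
    (hlow : ∀ n : ℕ, 2 ≤ n → ∀ k ≤ 5, a (n + 1) k = α k)
    (hrec : ∀ n : ℕ, 2 ≤ n → ∀ k : ℕ, 6 ≤ k →
      a (n + 1) k = (a n (k - 6) + a n (k - 5)) /
              (((k : ℝ) - 1) * ((k : ℝ) - 2) * ((k : ℝ) - 3) * ((k : ℝ) - 4))
            + 2 * a n (k - 3) / ((k : ℝ) * ((k : ℝ) - 1) * ((k : ℝ) - 2))
            - a n (k - 2) / ((k : ℝ) * ((k : ℝ) - 1))) :
    ∀ n : ℕ, 2 ≤ n → ∀ k ≤ 2 * n + 1, a n k = α k := by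
  intro n hn
  induction n, hn using Nat.le_induction with
  | base => intro k hk; exact hbase k (by omega)
  | succ n hn ih =>
    intro k hk
    by_cases h5 : k ≤ 5
    · exact hlow n hn k h5
    · have h6 : 6 ≤ k := by omega
      obtain ⟨m, rfl⟩ : ∃ m, k = m + 6 := ⟨k - 6, by omega⟩
      rw [hrec n hn (m + 6) (by omega)]
      have e0 : a n (m + 6 - 6) = α m := by
        rw [show m + 6 - 6 = m from by omega]; exact ih m (by omega)
      have e1 : a n (m + 6 - 5) = α (m + 1) := by
        rw [show m + 6 - 5 = m + 1 from by omega]; exact ih (m + 1) (by omega)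
      have e3 : a n (m + 6 - 3) = α (m + 3) := by
        rw [show m + 6 - 3 = m + 3 from by omega]; exact ih (m + 3) (by omega)
      have e4 : a n (m + 6 - 2) = α (m + 4) := by
        rw [show m + 6 - 2 = m + 4 from by omega]; exact ih (m + 4) (by omega)
      rw [e0, e1, e3, e4]
      have hk6 := hαrec (m + 6) (by omega)
      rw [show m + 6 - 3 = m + 3 from by omega, show m + 6 - 2 = m + 4 from by omega] at hk6
      have hk3 := hαrec (m + 3) (by omega)
      rw [show m + 3 - 3 = m from by omega, show m + 3 - 2 = m + 1 from by omega] at hk3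
      push_cast at hk6 hk3 ⊢
      rw [show ((m : ℝ) + 6) - 1 = (m : ℝ) + 5 from by ring] at hk6
      rw [show ((m : ℝ) + 3) - 1 = (m : ℝ) + 2 from by ring] at hk3
      rw [eq_div_iff (by positivity : ((m : ℝ) + 3) * ((m : ℝ) + 2) ≠ 0)] at hk3
      have hA : α m + α (m + 1) = -(((m : ℝ) + 3) * ((m : ℝ) + 2)) * α (m + 3) := by
        linear_combination hk3
      rw [hA, hk6]
      rw [show ((m : ℝ) + 6) - 1 = (m : ℝ) + 5 from by ring,
          show ((m : ℝ) + 6) - 2 = (m : ℝ) + 4 from by ring,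
          show ((m : ℝ) + 6) - 3 = (m : ℝ) + 3 from by ring,
          show ((m : ℝ) + 6) - 4 = (m : ℝ) + 2 from by ring]
      have h1 : (m : ℝ) + 6 ≠ 0 := by positivity
      have h2 : (m : ℝ) + 5 ≠ 0 := by positivity
      have h3 : (m : ℝ) + 4 ≠ 0 := by positivity
      have h4 : (m : ℝ) + 3 ≠ 0 := by positivity
      have h5' : (m : ℝ) + 2 ≠ 0 := by positivity
      field_simp
      ring
end
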